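/- Let T be a binary tree with n nodes labeled 1..n in infix order. Let π' be the set partition of [n] whose blocks are the label sets of the maximal left branches of T, and π'' the partition whose blocks are the label sets of the maximal right branches. Interpreting a noncrossing partition as the permutation whose cycles are its blocks traversed in increasing order, the product of the permutations of π' and π'' equals the long cycle (1 2 ... n). -/

import Mathlib

/-- Binary trees. -/
inductive BT : Type
  | leaf : BT
  | node : BT → BT → BT
  deriving DecidableEq

namespace BT

/-- Positions of the nodes of a binary tree in infix (in-order) order: the node
labeled `i` (0-indexed) is the position `(inorder t).get i` (a path of
directions from the root, `false` = left, `true` = right). -/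
def inorder : BT → List (List Bool)
  | leaf => []
  | node l r =>
      (inorder l).map (List.cons false) ++ [[]] ++ (inorder r).map (List.cons true)

/-- Remove the trailing occurrences of `b` from a path. Two nodes lie on the
same maximal left branch (chain of successive left children) iff stripping the
trailing `false`s of their positions gives the same position; similarly for
right branches with `true`. -/
def stripTrail (b : Bool) (p : List Bool) : List Bool :=
  (p.reverse.dropWhile (· == b)).reverse

/-- The permutation (given as a function on labels) whose cycles are the blocks
of the partition of the labels into maximal left branches (`b = false`) or
maximal right branches (`b = true`) of `t`, each block arranged as a cycle in
increasing order: a label is sent to the next larger label of its block, the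
largest label of a block being sent to the smallest one. -/
def branchNext (t : BT) (b : Bool) (x : Fin (inorder t).length) :
    Fin (inorder t).length :=
  let B : Finset (Fin (inorder t).length) :=
    Finset.univ.filter fun j =>
      stripTrail b ((inorder t).get j) = stripTrail b ((inorder t).get x)
  if h : (B.filter fun j => x < j).Nonempty then (B.filter fun j => x < j).min' h
  else if h2 : B.Nonempty then B.min' h2 else x


-- membership lemmas
lemma mem_node_false {l r : BT} {q : List Bool} :
    (false :: q) ∈ inorder (node l r) ↔ q ∈ inorder l := by
  simp [inorder]

lemma mem_node_true {l r : BT} {q : List Bool} :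
    (true :: q) ∈ inorder (node l r) ↔ q ∈ inorder r := by
  simp [inorder]

lemma mem_node_nil {l r : BT} : ([] : List Bool) ∈ inorder (node l r) := by
  simp [inorder]

lemma length_node {l r : BT} :
    (inorder (node l r)).length = (inorder l).length + 1 + (inorder r).length := by
  simp [inorder]; omega

-- prefix closure
lemma mem_of_append {p q : List Bool} : ∀ {t : BT}, p ++ q ∈ inorder t → p ∈ inorder t := by
  induction p with
  | nil =>
    intro t h
    cases t with
    | leaf => simp [inorder] at h
    | node l r => exact mem_node_nil
  | cons c p ih =>
    intro t h
    cases t with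
    | leaf => simp [inorder] at h
    | node l r =>
      cases c
      · rw [List.cons_append, mem_node_false] at h
        exact mem_node_false.2 (ih h)
      · rw [List.cons_append, mem_node_true] at h
        exact mem_node_true.2 (ih h)

lemma nodup_inorder (t : BT) : (inorder t).Nodup := by
  induction t with
  | leaf => simp [inorder]
  | node l r ihl ihr =>
    simp only [inorder]
    rw [List.nodup_append, List.nodup_append]
    refine ⟨⟨(List.nodup_map_iff (by intro a b h; simpa using h)).2 ihl, by simp, ?_⟩,
      (List.nodup_map_iff (by intro a b h; simpa using h)).2 ihr, ?_⟩
    · intro x hx y hy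
      simp only [List.mem_map] at hx
      obtain ⟨u, _, rfl⟩ := hx
      simp at hy; simp [hy]
    · intro x hx y hy
      simp only [List.mem_append, List.mem_map] at hx
      simp only [List.mem_map] at hy
      obtain ⟨u, _, rfl⟩ := hy
      rcases hx with ⟨u', _, rfl⟩ | hx
      · simp
      · simp at hx; simp [hx]

lemma getElem_node_left {l r : BT} {i : ℕ} (h : i < (inorder l).length)
    (h' : i < (inorder (node l r)).length) :
    (inorder (node l r))[i] = false :: (inorder l)[i] := by
  simp only [inorder]
  rw [List.getElem_append_left (by simpa using Nat.lt_succ_of_lt h),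
    List.getElem_append_left (by simpa using h), List.getElem_map]

lemma getElem_node_mid {l r : BT} (h' : (inorder l).length < (inorder (node l r)).length) :
    (inorder (node l r))[(inorder l).length] = [] := by
  simp only [inorder]
  rw [List.getElem_append_left (by simp), List.getElem_append_right (by simp)]
  simp

lemma getElem_node_right {l r : BT} {i : ℕ} (h : (inorder l).length < i)
    (h' : i < (inorder (node l r)).length) :
    (inorder (node l r))[i] =
      true :: ((inorder r)[i - (inorder l).length - 1]'(by
        have := h'; rw [length_node] at this; omega)) := by
  have hlen : i - ((inorder l).map (List.cons false) ++ [[]]).length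
      = i - (inorder l).length - 1 := by simp; omega
  simp only [inorder]
  rw [List.getElem_append_right (by simp; omega), List.getElem_map]
  simp only [hlen]

/-- Nodes in the right subtree of a node come strictly later in infix order. -/
lemma idx_lt_of_true : ∀ (t : BT) {i j : ℕ} (hi : i < (inorder t).length)
    (hj : j < (inorder t).length) {s : List Bool},
    (inorder t)[j] = (inorder t)[i] ++ true :: s → i < j := by
  intro t
  induction t with
  | leaf => intro i j hi; simp [inorder] at hi
  | node l r ihl ihr =>
    intro i j hi hj s h
    have hi' := hi; have hj' := hj
    rw [length_node] at hi' hj'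
    set a := (inorder l).length with ha
    rcases lt_trichotomy i a with hia | hia | hia
    · rw [getElem_node_left hia hi] at h
      rcases lt_trichotomy j a with hja | hja | hja
      · rw [getElem_node_left hja hj] at h
        exact ihl hia hja (by simpa using h)
      · subst hja; rw [getElem_node_mid hj] at h; simp at h
      · rw [getElem_node_right hja hj] at h; simp at h
    · subst hia
      rw [getElem_node_mid hi] at h
      rcases lt_trichotomy j a with hja | hja | hja
      · rw [getElem_node_left hja hj] at h; simp at h
      · subst hja; rw [getElem_node_mid hj] at h; simp at h
      · exact hja
    · rw [getElem_node_right hia hi] at h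
      rcases lt_trichotomy j a with hja | hja | hja
      · rw [getElem_node_left hja hj] at h; simp at h
      · subst hja; rw [getElem_node_mid hj] at h; simp at h
      · rw [getElem_node_right hja hj] at h
        have := ihr (i := i - a - 1) (j := j - a - 1) (by omega) (by omega)
          (by simpa using h)
        omega

/-- Nodes in the left subtree of a node come strictly earlier in infix order. -/
lemma idx_gt_of_false : ∀ (t : BT) {i j : ℕ} (hi : i < (inorder t).length)
    (hj : j < (inorder t).length) {s : List Bool},
    (inorder t)[j] = (inorder t)[i] ++ false :: s → j < i := by
  intro t
  induction t with
  | leaf => intro i j hi; simp [inorder] at hi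
  | node l r ihl ihr =>
    intro i j hi hj s h
    have hi' := hi; have hj' := hj
    rw [length_node] at hi' hj'
    set a := (inorder l).length with ha
    rcases lt_trichotomy i a with hia | hia | hia
    · rw [getElem_node_left hia hi] at h
      rcases lt_trichotomy j a with hja | hja | hja
      · rw [getElem_node_left hja hj] at h
        exact ihl hia hja (by simpa using h)
      · subst hja; rw [getElem_node_mid hj] at h; simp at h
      · rw [getElem_node_right hja hj] at h; simp at h
    · subst hia
      rw [getElem_node_mid hi] at h
      rcases lt_trichotomy j a with hja | hja | hja
      · exact hja
      · subst hja; rw [getElem_node_mid hj] at h; simp at h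
      · rw [getElem_node_right hja hj] at h; simp at h
    · rw [getElem_node_right hia hi] at h
      rcases lt_trichotomy j a with hja | hja | hja
      · rw [getElem_node_left hja hj] at h; simp at h
      · subst hja; rw [getElem_node_mid hj] at h; simp at h
      · rw [getElem_node_right hja hj] at h
        have := ihr (i := i - a - 1) (j := j - a - 1) (by omega) (by omega)
          (by simpa using h)
        omega



lemma dropWhile_head_not {α} {pred : α → Bool} :
    ∀ (l : List α) {x : α} {xs : List α}, l.dropWhile pred = x :: xs → pred x = false := by
  intro l
  induction l with
  | nil => intro x xs h; simp [List.dropWhile] at h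
  | cons c l ih =>
    intro x xs h
    rw [List.dropWhile_cons] at h
    by_cases hc : pred c
    · rw [if_pos hc] at h; exact ih h
    · rw [if_neg hc] at h
      cases h
      simpa using hc

lemma strip_no_trail (b : Bool) (p : List Bool) (q : List Bool) :
    stripTrail b p ≠ q ++ [b] := by
  intro h
  have h2 : (p.reverse.dropWhile (· == b)) = b :: q.reverse := by
    have := congrArg List.reverse h
    simpa [stripTrail] using this
  have := dropWhile_head_not _ h2
  simp at this

lemma strip_spec (b : Bool) (p : List Bool) :
    ∃ m, p = stripTrail b p ++ List.replicate m b := by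
  refine ⟨(p.reverse.takeWhile (· == b)).length, ?_⟩
  have h1 : p.reverse.takeWhile (· == b) = List.replicate (p.reverse.takeWhile (· == b)).length b :=
    List.eq_replicate_of_mem (fun x hx => by simpa using List.mem_takeWhile_imp hx)
  conv_lhs => rw [← p.reverse_reverse, ← List.takeWhile_append_dropWhile (p := (· == b)) (l := p.reverse)]
  rw [List.reverse_append, h1, List.reverse_replicate]
  simp [stripTrail]

lemma strip_eq_self {b : Bool} {p : List Bool} (h : ∀ q, p ≠ q ++ [b]) :
    stripTrail b p = p := by
  match hr : p.reverse with
  | [] =>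
    have : p = [] := by simpa using congrArg List.reverse hr
    simp [this, stripTrail]
  | c :: cs =>
    have hp : p = cs.reverse ++ [c] := by
      have := congrArg List.reverse hr; simpa using this
    have hc : (c == b) = false := by
      by_contra hc
      simp only [Bool.not_eq_false, beq_iff_eq] at hc
      exact h cs.reverse (hc ▸ hp)
    rw [stripTrail, hr, List.dropWhile_cons, hc]
    simp [← hr]

lemma strip_append_replicate (b : Bool) (p : List Bool) (m : ℕ) :
    stripTrail b (p ++ List.replicate m b) = stripTrail b p := by
  induction m with
  | zero => simp
  | succ m ih =>
    rw [stripTrail, List.reverse_append, List.reverse_replicate, List.replicate_succ,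
      List.cons_append, List.dropWhile_cons]
    simp only [beq_self_eq_true, if_true]
    rw [← List.reverse_replicate, ← List.reverse_append, ← stripTrail, ih]

lemma strip_strip (b : Bool) (p : List Bool) : stripTrail b (stripTrail b p) = stripTrail b p :=
  strip_eq_self (strip_no_trail b p)

lemma strip_eq_iff {b : Bool} {p q : List Bool} :
    stripTrail b q = stripTrail b p ↔ ∃ m, q = stripTrail b p ++ List.replicate m b := by
  constructor
  · intro h
    obtain ⟨m, hm⟩ := strip_spec b q
    exact ⟨m, by rw [hm, h]⟩
  · rintro ⟨m, rfl⟩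
    rw [strip_append_replicate, strip_strip]



section spec
variable (t : BT) (b : Bool) (x : Fin (inorder t).length)

lemma branchNext_spec₁ (j0 : Fin (inorder t).length)
    (hj0 : stripTrail b ((inorder t).get j0) = stripTrail b ((inorder t).get x)) (hx : x < j0) :
    stripTrail b ((inorder t).get (branchNext t b x)) = stripTrail b ((inorder t).get x)
    ∧ x < branchNext t b x
    ∧ ∀ j, stripTrail b ((inorder t).get j) = stripTrail b ((inorder t).get x) →
        x < j → branchNext t b x ≤ j := by
  have hne : ((Finset.univ.filter fun j =>
      stripTrail b ((inorder t).get j) = stripTrail b ((inorder t).get x)).filter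
        fun j => x < j).Nonempty := ⟨j0, by simp only [Finset.mem_filter, Finset.mem_univ, true_and]; exact ⟨by simpa using hj0, hx⟩⟩
  have hbn : branchNext t b x = ((Finset.univ.filter fun j =>
      stripTrail b ((inorder t).get j) = stripTrail b ((inorder t).get x)).filter
        fun j => x < j).min' hne := by
    simp only [branchNext]
    rw [dif_pos hne]
  have hmem := Finset.min'_mem _ hne
  simp only [Finset.mem_filter, Finset.mem_univ, true_and] at hmem
  refine ⟨by rw [hbn]; exact hmem.1, by rw [hbn]; exact hmem.2, ?_⟩
  intro j hj hxj
  rw [hbn]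
  exact Finset.min'_le _ _ (by simp only [Finset.mem_filter, Finset.mem_univ, true_and]; exact ⟨by simpa using hj, hxj⟩)

lemma branchNext_spec₂
    (hno : ∀ j : Fin (inorder t).length,
      stripTrail b ((inorder t).get j) = stripTrail b ((inorder t).get x) → ¬ x < j) :
    stripTrail b ((inorder t).get (branchNext t b x)) = stripTrail b ((inorder t).get x)
    ∧ ∀ j, stripTrail b ((inorder t).get j) = stripTrail b ((inorder t).get x) →
        branchNext t b x ≤ j := by
  have hemp : ¬ ((Finset.univ.filter fun j =>
      stripTrail b ((inorder t).get j) = stripTrail b ((inorder t).get x)).filter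
        fun j => x < j).Nonempty := by
    rintro ⟨j, hj⟩
    simp only [Finset.mem_filter, Finset.mem_univ, true_and] at hj
    exact hno j hj.1 hj.2
  have hne2 : (Finset.univ.filter fun j =>
      stripTrail b ((inorder t).get j) = stripTrail b ((inorder t).get x)).Nonempty :=
    ⟨x, by simp⟩
  have hbn : branchNext t b x = (Finset.univ.filter fun j =>
      stripTrail b ((inorder t).get j) = stripTrail b ((inorder t).get x)).min' hne2 := by
    simp only [branchNext]
    rw [dif_neg hemp, dif_pos hne2]
  have hmem := Finset.min'_mem _ hne2
  simp only [Finset.mem_filter, Finset.mem_univ, true_and] at hmem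
  refine ⟨by rw [hbn]; exact hmem, ?_⟩
  intro j hj
  rw [hbn]
  exact Finset.min'_le _ _ (by simp only [Finset.mem_filter, Finset.mem_univ, true_and]; simpa using hj)

end spec

lemma get_mem' {α : Type*} {l : List α} (i : Fin l.length) : l.get i ∈ l := by
  rw [List.get_eq_getElem]; exact List.getElem_mem _

lemma append_replicate_lt {b : Bool} {P : List Bool} {k m : ℕ} (h : k < m) :
    P ++ List.replicate m b = (P ++ List.replicate k b) ++ b :: List.replicate (m - k - 1) b := by
  have hm' : m = k + ((m - k - 1) + 1) := by omega
  conv_lhs => rw [hm']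
  rw [List.replicate_add, List.replicate_succ, ← List.append_assoc]

lemma true_branch_lt {t : BT} {i j : Fin (inorder t).length} {P : List Bool} {k m : ℕ}
    (hi : (inorder t).get i = P ++ List.replicate k true)
    (hj : (inorder t).get j = P ++ List.replicate m true) (h : k < m) : i < j := by
  rw [Fin.lt_def]
  refine idx_lt_of_true t i.2 j.2 (s := List.replicate (m - k - 1) true) ?_
  rw [← List.get_eq_getElem, ← List.get_eq_getElem, hj, hi, append_replicate_lt h]

lemma false_branch_lt {t : BT} {i j : Fin (inorder t).length} {P : List Bool} {k m : ℕ}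
    (hi : (inorder t).get i = P ++ List.replicate k false)
    (hj : (inorder t).get j = P ++ List.replicate m false) (h : k < m) : j < i := by
  rw [Fin.lt_def]
  refine idx_gt_of_false t i.2 j.2 (s := List.replicate (m - k - 1) false) ?_
  rw [← List.get_eq_getElem, ← List.get_eq_getElem, hj, hi, append_replicate_lt h]

lemma get_inj {t : BT} {i j : Fin (inorder t).length}
    (h : (inorder t).get i = (inorder t).get j) : i = j := by
  rw [List.get_eq_getElem, List.get_eq_getElem] at h
  exact Fin.ext ((nodup_inorder t).getElem_inj_iff.mp h)

lemma replicate_inj {b : Bool} {P : List Bool} {k m : ℕ}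
    (h : P ++ List.replicate k b = P ++ List.replicate m b) : k = m := by
  have := congrArg List.length h
  simpa using this

/-- Closed form: if node `i` has a right child, `branchNext true` goes to it. -/
lemma get_bn_true_mem {t : BT} (i : Fin (inorder t).length)
    (h : (inorder t).get i ++ [true] ∈ inorder t) :
    (inorder t).get (branchNext t true i) = (inorder t).get i ++ [true] := by
  obtain ⟨k, hk⟩ := strip_spec true ((inorder t).get i)
  set P := stripTrail true ((inorder t).get i) with hP
  obtain ⟨j0, hj0⟩ := List.mem_iff_get.1 h
  have hj0' : (inorder t).get j0 = P ++ List.replicate (k + 1) true := by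
    rw [hj0]; conv_lhs => rw [hk]
    rw [List.append_assoc, ← List.replicate_succ' (n := k)]
  have hstrip_j0 : stripTrail true ((inorder t).get j0) = P := by
    rw [hj0', strip_append_replicate, strip_strip]
  have hij0 : i < j0 := true_branch_lt hk hj0' (Nat.lt_succ_self k)
  obtain ⟨hs, hlt, hmin⟩ := branchNext_spec₁ t true i j0 hstrip_j0 hij0
  set y := branchNext t true i
  obtain ⟨m, hm⟩ := strip_eq_iff.1 hs
  have hkm : k < m := by
    rcases Nat.lt_trichotomy m k with h' | h' | h'
    · exact absurd (true_branch_lt hm hk h') (Fin.lt_asymm hlt)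
    · exact absurd (get_inj (hm.trans (h' ▸ hk.symm))) (Fin.ne_of_gt hlt)
    · exact h'
  have hy_le : y ≤ j0 := hmin j0 hstrip_j0 hij0
  have : m = k + 1 := by
    by_contra hne
    have : k + 1 < m := by omega
    exact absurd (true_branch_lt hj0' hm this) (Fin.not_lt.2 hy_le)
  rw [hm, this, hj0'.symm, hj0]

/-- Closed form: if node `i` has no right child, `branchNext true` goes to the
top of its maximal right branch. -/
lemma get_bn_true_not_mem {t : BT} (i : Fin (inorder t).length)
    (h : (inorder t).get i ++ [true] ∉ inorder t) :
    (inorder t).get (branchNext t true i) = stripTrail true ((inorder t).get i) := by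
  obtain ⟨k, hk⟩ := strip_spec true ((inorder t).get i)
  set P := stripTrail true ((inorder t).get i) with hP
  have hno : ∀ j : Fin (inorder t).length,
      stripTrail true ((inorder t).get j) = P → ¬ i < j := by
    intro j hj hij
    obtain ⟨m, hm⟩ := strip_eq_iff.1 hj
    have hkm : k < m := by
      rcases Nat.lt_trichotomy m k with h' | h' | h'
      · exact absurd (true_branch_lt hm hk h') (Fin.lt_asymm hij)
      · exact absurd (get_inj (hm.trans (h' ▸ hk.symm))) (Fin.ne_of_gt hij)
      · exact h'
    have hmem2 : (inorder t).get j ∈ inorder t := get_mem' _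
    rw [hm, ← hP, append_replicate_lt hkm, ← hk, List.append_cons] at hmem2
    exact h (mem_of_append hmem2)
  obtain ⟨hs, hmin⟩ := branchNext_spec₂ t true i hno
  set y := branchNext t true i
  obtain ⟨m, hm⟩ := strip_eq_iff.1 hs
  have hPmem : P ∈ inorder t := by
    refine mem_of_append (q := List.replicate k true) ?_
    rw [← hk]; exact get_mem' _
  obtain ⟨jP, hjP⟩ := List.mem_iff_get.1 hPmem
  have hsjP : stripTrail true ((inorder t).get jP) = P := by rw [hjP, strip_strip]
  have hy_le : y ≤ jP := hmin jP hsjP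
  have hm0 : m = 0 := by
    by_contra hne
    have : (0:ℕ) < m := by omega
    have := true_branch_lt (P := P) (k := 0) (by simpa using hjP) hm this
    exact absurd this (Fin.not_lt.2 hy_le)
  rw [hm, hm0]; simp [hP]

/-- Closed form: if node `i` has a parent of which it is the left child
(its position ends with `false`), `branchNext false` goes to that parent. -/
lemma get_bn_false_drop {t : BT} (i : Fin (inorder t).length) {q : List Bool}
    (h : (inorder t).get i = q ++ [false]) :
    (inorder t).get (branchNext t false i) = q := by
  obtain ⟨m, hm⟩ := strip_spec false ((inorder t).get i)
  set Q := stripTrail false ((inorder t).get i) with hQ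
  have hm1 : 1 ≤ m := by
    rcases Nat.eq_zero_or_pos m with h0 | h0
    · exfalso
      rw [h0] at hm
      simp only [List.replicate_zero, List.append_nil] at hm
      exact strip_no_trail false ((inorder t).get i) q (by rw [← hQ, ← hm, h])
    · exact h0
  have hq : q = Q ++ List.replicate (m - 1) false := by
    have : q ++ [false] = (Q ++ List.replicate (m - 1) false) ++ [false] := by
      rw [← h, hm, List.append_assoc, ← List.replicate_succ']
      congr 2
      omega
    exact List.append_cancel_right this
  have hqmem : q ∈ inorder t := by
    refine mem_of_append (q := [false]) ?_
    rw [← h]; exact get_mem' _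
  obtain ⟨jq, hjq⟩ := List.mem_iff_get.1 hqmem
  have hjq' : (inorder t).get jq = Q ++ List.replicate (m - 1) false := by rw [hjq, hq]
  have hsjq : stripTrail false ((inorder t).get jq) = Q := by
    rw [hjq', strip_append_replicate, strip_strip]
  have hijq : i < jq := false_branch_lt hjq' hm (by omega)
  obtain ⟨hs, hlt, hmin⟩ := branchNext_spec₁ t false i jq hsjq hijq
  set y := branchNext t false i
  obtain ⟨m', hm'⟩ := strip_eq_iff.1 hs
  have hm'm : m' < m := by
    rcases Nat.lt_trichotomy m m' with h' | h' | h'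
    · exact absurd (false_branch_lt hm hm' h') (Fin.lt_asymm hlt)
    · exact absurd (get_inj (hm'.trans (h' ▸ hm.symm))) (Fin.ne_of_gt hlt)
    · exact h'
  have hy_le : y ≤ jq := hmin jq hsjq hijq
  have : m' = m - 1 := by
    by_contra hne
    have : m' < m - 1 := by omega
    exact absurd (false_branch_lt hm' hjq' this) (Fin.not_lt.2 hy_le)
  rw [hm', this, ← hq]

/-- Closed form: if node `i`'s position has no trailing `false`, `branchNext
false` goes to the bottom (the node with no left child) of its maximal left
branch. -/
lemma get_bn_false_top {t : BT} (i : Fin (inorder t).length)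
    (h : ∀ q, (inorder t).get i ≠ q ++ [false]) :
    stripTrail false ((inorder t).get (branchNext t false i)) = (inorder t).get i
    ∧ (inorder t).get (branchNext t false i) ++ [false] ∉ inorder t := by
  have hself : stripTrail false ((inorder t).get i) = (inorder t).get i := strip_eq_self h
  have hno : ∀ j : Fin (inorder t).length,
      stripTrail false ((inorder t).get j) = stripTrail false ((inorder t).get i) → ¬ i < j := by
    intro j hj hij
    obtain ⟨m', hm'⟩ := strip_eq_iff.1 hj
    rw [hself] at hm'
    rcases Nat.eq_zero_or_pos m' with h0 | h0
    · rw [h0] at hm'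
      simp only [List.replicate_zero, List.append_nil] at hm'
      exact absurd (get_inj hm') (Fin.ne_of_gt hij)
    · have : j < i := false_branch_lt (k := 0) (P := (inorder t).get i) (by simp) hm' h0
      exact absurd this (Fin.lt_asymm hij)
  obtain ⟨hs, hmin⟩ := branchNext_spec₂ t false i hno
  set y := branchNext t false i
  refine ⟨by rw [hs, hself], ?_⟩
  intro hmem
  obtain ⟨m, hm⟩ := strip_eq_iff.1 hs
  rw [hself] at hm
  obtain ⟨j2, hj2⟩ := List.mem_iff_get.1 hmem
  have hj2' : (inorder t).get j2 = (inorder t).get i ++ List.replicate (m + 1) false := by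
    rw [hj2, hm, List.append_assoc, ← List.replicate_succ' (n := m)]
  have hsj2 : stripTrail false ((inorder t).get j2) = stripTrail false ((inorder t).get i) := by
    rw [hj2', strip_append_replicate]
  have h1 : y ≤ j2 := hmin j2 hsj2
  have h2 : j2 < y := false_branch_lt hm hj2' (Nat.lt_succ_self m)
  exact absurd h2 (Fin.not_lt.2 h1)

lemma deepest_unique {t : BT} {r1 r2 : List Bool} (h1 : r1 ∈ inorder t) (h2 : r2 ∈ inorder t)
    (hs : stripTrail false r1 = stripTrail false r2)
    (e1 : r1 ++ [false] ∉ inorder t) (e2 : r2 ++ [false] ∉ inorder t) : r1 = r2 := by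
  obtain ⟨m1, hm1⟩ := strip_eq_iff.1 hs
  obtain ⟨m2, hm2⟩ := strip_spec false r2
  set Q := stripTrail false r2
  have key : ∀ a b : ℕ, a < b → ∀ x : List Bool, x = Q ++ List.replicate a false →
      ∀ z : List Bool, z = Q ++ List.replicate b false → z ∈ inorder t → x ++ [false] ∈ inorder t := by
    intro a b hab x hx z hz hzm
    have : z = (x ++ [false]) ++ List.replicate (b - a - 1) false := by
      rw [hz, hx, append_replicate_lt hab, List.append_cons]
    exact mem_of_append (this ▸ hzm)
  rcases Nat.lt_trichotomy m1 m2 with h' | h' | h'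
  · exact absurd (key m1 m2 h' r1 hm1 r2 hm2 h2) e1
  · rw [hm1, hm2, h']
  · exact absurd (key m2 m1 h' r2 hm2 r1 hm1 h1) e2

lemma getElem_zero_spec : ∀ (t : BT) (h : 0 < (inorder t).length),
    ∃ m, (inorder t)[0] = List.replicate m false := by
  intro t
  induction t with
  | leaf => intro h; simp [inorder] at h
  | node l r ihl ihr =>
    intro h
    rcases Nat.eq_zero_or_pos (inorder l).length with hl | hl
    · refine ⟨0, ?_⟩
      have hmid := getElem_node_mid (l := l) (r := r) (by rw [length_node]; omega)
      simp only [hl] at hmid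
      simpa using hmid
    · obtain ⟨m, hm⟩ := ihl hl
      exact ⟨m + 1, by rw [getElem_node_left hl, hm, List.replicate_succ]⟩

lemma getElem_last_spec : ∀ (t : BT) (h : 0 < (inorder t).length),
    ∃ k, (inorder t)[(inorder t).length - 1] = List.replicate k true := by
  intro t
  induction t with
  | leaf => intro h; simp [inorder] at h
  | node l r ihl ihr =>
    intro h
    rcases Nat.eq_zero_or_pos (inorder r).length with hr | hr
    · refine ⟨0, ?_⟩
      have e : (inorder (node l r)).length - 1 = (inorder l).length := by
        rw [length_node]; omega
      have hmid := getElem_node_mid (l := l) (r := r) (by rw [length_node]; omega)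
      simp only [← e] at hmid
      simpa using hmid
    · obtain ⟨k, hk⟩ := ihr hr
      refine ⟨k + 1, ?_⟩
      have hlt : (inorder l).length < (inorder (node l r)).length - 1 := by
        rw [length_node]; omega
      rw [getElem_node_right hlt, List.replicate_succ]
      have e2 : (inorder (node l r)).length - 1 - (inorder l).length - 1
          = (inorder r).length - 1 := by rw [length_node]; omega
      simp only [e2, hk]

lemma last_no_ext (t : BT) (h : 0 < (inorder t).length) :
    (inorder t)[(inorder t).length - 1]'(by omega) ++ [true] ∉ inorder t := by
  intro hc
  obtain ⟨j, hj⟩ := List.mem_iff_get.1 hc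
  have := idx_lt_of_true t (i := (inorder t).length - 1) (by omega) j.2 (s := [])
    (by rw [← List.get_eq_getElem, hj])
  omega

lemma head_no_ext (t : BT) (h : 0 < (inorder t).length) :
    (inorder t)[0] ++ [false] ∉ inorder t := by
  intro hc
  obtain ⟨j, hj⟩ := List.mem_iff_get.1 hc
  have := idx_gt_of_false t (i := 0) h j.2 (s := [])
    (by rw [← List.get_eq_getElem, hj])
  omega

def SuccRel (L : List (List Bool)) (p r : List Bool) : Prop :=
  (p ++ [true] ∈ L ∧ ∃ m, r = p ++ true :: List.replicate m false ∧ r ++ [false] ∉ L)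
  ∨ (p ++ [true] ∉ L ∧ ∃ k, p = r ++ false :: List.replicate k true)

lemma succRel_cons {L L' : List (List Bool)} {c : Bool} {u v : List Bool}
    (hmem : ∀ q, (c :: q) ∈ L' ↔ q ∈ L) (h : SuccRel L u v) : SuccRel L' (c :: u) (c :: v) := by
  rcases h with ⟨h1, m, h2, h3⟩ | ⟨h1, k, h2⟩
  · left
    refine ⟨?_, m, ?_, ?_⟩
    · rw [List.cons_append]; exact (hmem _).2 h1
    · rw [h2]; rfl
    · rw [List.cons_append]; intro hc; exact h3 ((hmem _).1 hc)
  · right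
    refine ⟨?_, k, ?_⟩
    · rw [List.cons_append]; intro hc; exact h1 ((hmem _).1 hc)
    · rw [h2]; rfl

theorem succRel_getElem : ∀ (t : BT) (i : ℕ) (h : i + 1 < (inorder t).length),
    SuccRel (inorder t) ((inorder t)[i]'(by omega)) ((inorder t)[i+1]'h) := by
  intro t
  induction t with
  | leaf => intro i h; simp [inorder] at h
  | node l r ihl ihr =>
    intro i h
    have hn := h
    rw [length_node] at hn
    by_cases h1 : i + 1 < (inorder l).length
    · rw [getElem_node_left (by omega) (by omega), getElem_node_left h1 h]
      exact succRel_cons (fun q => mem_node_false) (ihl i h1)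
    · by_cases h2 : i + 1 = (inorder l).length
      · have hl0 : 0 < (inorder l).length := by omega
        obtain ⟨k, hk⟩ := getElem_last_spec l hl0
        have ei : i = (inorder l).length - 1 := by omega
        rw [getElem_node_left (by omega) (by omega)]
        have emid : (inorder (node l r))[i+1]'h = [] := by
          simp only [h2]
          exact getElem_node_mid (by omega)
        rw [emid]
        right
        constructor
        · rw [List.cons_append]
          intro hc
          rw [mem_node_false] at hc
          refine last_no_ext l hl0 ?_
          simp only [← ei]
          exact hc
        · refine ⟨k, ?_⟩
          simp only [List.nil_append]
          congr 1
          simp only [ei, hk]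
      · by_cases h3 : i = (inorder l).length
        · have hr0 : 0 < (inorder r).length := by omega
          obtain ⟨m, hm⟩ := getElem_zero_spec r hr0
          have emid : (inorder (node l r))[i]'(by omega) = [] := by
            simp only [h3]
            exact getElem_node_mid (by omega)
          have eright : (inorder (node l r))[i+1]'h = true :: (inorder r)[0] := by
            rw [getElem_node_right (by omega) h]
            congr 1
            · congr 1
              omega
          rw [emid, eright]
          left
          have hrnil : ([] : List Bool) ∈ inorder r := by
            cases r with
            | leaf => simp [inorder] at hr0
            | node r1 r2 => exact mem_node_nil
          refine ⟨by simpa [mem_node_true] using hrnil, m, by simp [hm], ?_⟩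
          rw [hm, List.cons_append]
          intro hc
          rw [mem_node_true, ← List.replicate_succ'] at hc
          refine head_no_ext r hr0 ?_
          rw [hm, ← List.replicate_succ']
          exact hc
        · have h4 : (inorder l).length < i := by omega
          rw [getElem_node_right h4 (by omega), getElem_node_right (by omega) h]
          have e1 : i + 1 - (inorder l).length - 1 = (i - (inorder l).length - 1) + 1 := by
            omega
          simp only [e1]
          exact succRel_cons (fun q => mem_node_true)
            (ihr (i - (inorder l).length - 1) (by omega))

lemma last_append_ne {x q : List Bool} {b c : Bool} (h : b ≠ c) : x ++ [b] ≠ q ++ [c] := by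
  intro he
  have h2 := congrArg List.getLast? he
  rw [List.getLast?_concat, List.getLast?_concat] at h2
  exact h (Option.some.inj h2)

lemma stripTrail_nil (b : Bool) : stripTrail b [] = [] := rfl

lemma val_finRotate_of_lt {m : ℕ} (j : Fin m) (hj : (j : ℕ) + 1 < m) :
    ((finRotate m j : Fin m) : ℕ) = (j : ℕ) + 1 := by
  cases m with
  | zero => exact j.elim0
  | succ m' =>
    rw [finRotate_succ_apply]
    exact Fin.val_add_one_of_lt (by
      rw [Fin.lt_iff_val_lt_val, Fin.val_last]; omega)

lemma val_finRotate_last {m : ℕ} (j : Fin m) (hj : (j : ℕ) + 1 = m) :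
    ((finRotate m j : Fin m) : ℕ) = 0 := by
  cases m with
  | zero => exact j.elim0
  | succ m' =>
    have hja : j = Fin.last m' := Fin.ext (by rw [Fin.val_last]; omega)
    rw [hja, finRotate_last]
    rfl


/-- for a binary tree with `n` nodes labeled `0,…,n-1` in infix
order, the product `w_{π'} · w_{π''}` of the permutation `w_{π'}` of the
partition `π'` into maximal left branches with the permutation `w_{π''}` of the
partition `π''` into maximal right branches is the long cycle
`(0 1 2 … n-1)`. -/
theorem statement6 (t : BT) (i : Fin (inorder t).length) :
    branchNext t false (branchNext t true i) = finRotate _ i := by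
  have hn : 0 < (inorder t).length := i.pos
  apply get_inj
  by_cases hlast : (i : ℕ) + 1 < (inorder t).length
  · -- non-wrapping case
    have hRHS : (inorder t).get (finRotate _ i) = (inorder t)[(i : ℕ) + 1] := by
      rw [List.get_eq_getElem]
      simp only [val_finRotate_of_lt i hlast]
    rw [hRHS]
    have hsucc := succRel_getElem t i hlast
    rcases hsucc with ⟨hmem, m, hr, hnot⟩ | ⟨hnmem, k, hp⟩
    · -- i has a right child
      have hmem' : (inorder t).get i ++ [true] ∈ inorder t := by
        rwa [List.get_eq_getElem]
      have e1 := get_bn_true_mem i hmem'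
      set j := branchNext t true i with hj
      have hnofalse : ∀ q, (inorder t).get j ≠ q ++ [false] := by
        intro q
        rw [e1]
        exact last_append_ne (by simp)
      obtain ⟨hstrip, hnomem⟩ := get_bn_false_top j hnofalse
      refine deepest_unique (get_mem' _) (List.getElem_mem _) ?_ hnomem ?_
      · rw [hstrip, e1, List.get_eq_getElem]
        conv_rhs => rw [hr, List.append_cons, strip_append_replicate,
          strip_eq_self (fun q => last_append_ne (by simp))]
      · exact hnot
    · -- i has no right child, and is not the last node
      have hnmem' : (inorder t).get i ++ [true] ∉ inorder t := by
        rwa [List.get_eq_getElem]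
      have e1 := get_bn_true_not_mem i hnmem'
      set j := branchNext t true i with hj
      have hgetj : (inorder t).get j = (inorder t)[(i : ℕ) + 1] ++ [false] := by
        rw [e1]
        have hp' : (inorder t).get i
            = ((inorder t)[(i : ℕ) + 1] ++ [false]) ++ List.replicate k true := by
          rw [List.get_eq_getElem, hp, List.append_cons]
        rw [hp', strip_append_replicate, strip_eq_self (fun q => last_append_ne (by simp))]
      exact get_bn_false_drop j hgetj
  · -- wrapping case : i is the last node
    have hival : (i : ℕ) + 1 = (inorder t).length := by omega
    have hRHS : (inorder t).get (finRotate _ i) = (inorder t)[0] := by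
      rw [List.get_eq_getElem]
      simp only [val_finRotate_last i hival]
    rw [hRHS]
    obtain ⟨K, hK⟩ := getElem_last_spec t hn
    have hgeti : (inorder t).get i = List.replicate K true := by
      rw [List.get_eq_getElem]
      have e : (i : ℕ) = (inorder t).length - 1 := by omega
      simp only [e, hK]
    have hnmem' : (inorder t).get i ++ [true] ∉ inorder t := by
      intro hc
      refine last_no_ext t hn ?_
      have e : (i : ℕ) = (inorder t).length - 1 := by omega
      rw [List.get_eq_getElem] at hc
      simp only [e] at hc
      exact hc
    have e1 := get_bn_true_not_mem i hnmem'
    set j := branchNext t true i with hj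
    have hgetj : (inorder t).get j = [] := by
      rw [e1, hgeti, show List.replicate K true = [] ++ List.replicate K true by simp,
        strip_append_replicate, stripTrail_nil]
    have hnofalse : ∀ q, (inorder t).get j ≠ q ++ [false] := by
      intro q
      rw [hgetj]
      simp
    obtain ⟨hstrip, hnomem⟩ := get_bn_false_top j hnofalse
    obtain ⟨M, hM⟩ := getElem_zero_spec t hn
    refine deepest_unique (get_mem' _) (List.getElem_mem _) ?_ hnomem ?_
    · rw [hstrip, hgetj, hM,
        show List.replicate M false = [] ++ List.replicate M false by simp,
        strip_append_replicate, stripTrail_nil]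
    · exact head_no_ext t hn

end BT
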